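/- arXiv:1208.4267 — 3 statements merged into one kernel-verified Lean document; each statement's English description precedes it below -/
import Mathlib

section
/- Let X be a Banach space whose dual unit ball is weak-star sequentially compact, and whose dual X* has the dual weak Kadec-Klee property (weak-star convergent sequences on the dual unit sphere with limit in the sphere are weakly convergent). Then every separable subspace Y of X has separable dual; that is, X is an Asplund space. -/
/-! Through a dense sequence of a separable `Y ⊆ X`, the weak-star topology on the unit sphere
of `Y*` embeds in `ℝ^ℕ`, so the sphere contains a countable set `D` of which every point is a
weak-star sequential limit. Extending to `X` by Hahn-Banach and passing to a weak-star convergent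
subsequence gives a limit of norm one, since it restricts to the limit in `Y*`; wKK* makes the
convergence weak, and restricting back, every point of the sphere is a weak limit of a sequence
in `D`. Closed subspaces being weakly closed, the closed span of `D` is all of `Y*`. -/

open NormedSpace Filter Topology TopologicalSpace

/-- Weak-star convergence of a sequence in the dual. -/
def WStarTendsto {X : Type*} [NormedAddCommGroup X] [NormedSpace ℝ X]
    (f : ℕ → StrongDual ℝ X) (g : StrongDual ℝ X) : Prop :=
  ∀ x : X, Tendsto (fun n => f n x) atTop (𝓝 (g x))

/-- Weak convergence of a sequence in the dual. -/
def WeakTendsto {X : Type*} [NormedAddCommGroup X] [NormedSpace ℝ X]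
    (f : ℕ → StrongDual ℝ X) (g : StrongDual ℝ X) : Prop :=
  ∀ F : StrongDual ℝ (StrongDual ℝ X), Tendsto (fun n => F (f n)) atTop (𝓝 (F g))

/-- The dual weak Kadec-Klee property wKK*. -/
def WKKStar (X : Type*) [NormedAddCommGroup X] [NormedSpace ℝ X] : Prop :=
  ∀ (f : ℕ → StrongDual ℝ X) (g : StrongDual ℝ X), (∀ n, ‖f n‖ = 1) → ‖g‖ = 1 →
    WStarTendsto f g → WeakTendsto f g

/-- The dual unit ball is weak-star sequentially compact. -/
def DualBallWStarSeqCompact (X : Type*) [NormedAddCommGroup X] [NormedSpace ℝ X] : Prop :=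
  ∀ f : ℕ → StrongDual ℝ X, (∀ n, ‖f n‖ ≤ 1) →
    ∃ (g : StrongDual ℝ X) (φ : ℕ → ℕ), ‖g‖ ≤ 1 ∧ StrictMono φ ∧ WStarTendsto (f ∘ φ) g

theorem ContinuousLinearMap.tendsto_apply_of_denseRange {𝕜 E F ι κ : Type*}
    [NontriviallyNormedField 𝕜] [NormedAddCommGroup E] [NormedSpace 𝕜 E]
    [NormedAddCommGroup F] [NormedSpace 𝕜 F] {l : Filter ι}
    {d : ι → E →L[𝕜] F} {a : E →L[𝕜] F} (hd : ∃ C, ∀ i, ‖d i‖ ≤ C)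
    {u : κ → E} (hu : DenseRange u) (h : ∀ k, Tendsto (fun i => d i (u k)) l (𝓝 (a (u k))))
    (y : E) : Tendsto (fun i => d i y) l (𝓝 (a y)) :=
  have hequi : Equicontinuous ((↑) ∘ d) := ((NormedSpace.equicontinuous_TFAE d).out 5 1).mp hd
  hu.induction_on y (hequi.isClosed_setOfPred_tendsto a.continuous) h

theorem Convex.mem_of_tendsto_dual_apply {E ι : Type*} [NormedAddCommGroup E] [NormedSpace ℝ E]
    {s : Set E} (hs : Convex ℝ s) (hsc : IsClosed s) {l : Filter ι} [l.NeBot] {d : ι → E} {a : E}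
    (h : ∀ f : StrongDual ℝ E, Tendsto (fun i => f (d i)) l (𝓝 (f a)))
    (hd : ∀ᶠ i in l, d i ∈ s) : a ∈ s := by
  by_contra ha
  obtain ⟨f, u, hfs, hfa⟩ := geometric_hahn_banach_closed_point hs hsc ha
  exact hfa.not_ge (le_of_tendsto (h f) (hd.mono fun i hi => (hfs _ hi).le))

theorem separableSpace_of_sphere_subset_closure_span {𝕜 E : Type*} [RCLike 𝕜]
    [NormedAddCommGroup E] [NormedSpace 𝕜 E] {D : Set E} (hD : D.Countable)
    (h : Metric.sphere (0 : E) 1 ⊆ (Submodule.span 𝕜 D).topologicalClosure) :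
    SeparableSpace E := by
  set Z := (Submodule.span 𝕜 D).topologicalClosure
  have hZ : (Z : Set E) = Set.univ := by
    refine Set.eq_univ_of_forall fun x => ?_
    rcases eq_or_ne x 0 with rfl | hx
    · exact Z.zero_mem
    have hunit : (‖x‖⁻¹ : 𝕜) • x ∈ Z := h (by simp [norm_smul_inv_norm hx])
    simpa [smul_smul, hx] using Z.smul_mem (‖x‖ : 𝕜) hunit
  rw [← isSeparable_univ_iff, ← hZ, Submodule.topologicalClosure_coe]
  exact hD.isSeparable.span.closure

theorem exists_countable_subset_sphere_wStarTendsto (E : Type*) [NormedAddCommGroup E]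
    [NormedSpace ℝ E] [SeparableSpace E] :
    ∃ D : Set (StrongDual ℝ E), D.Countable ∧ D ⊆ Metric.sphere 0 1 ∧
      ∀ a ∈ Metric.sphere (0 : StrongDual ℝ E) 1,
        ∃ d : ℕ → StrongDual ℝ E, (∀ n, d n ∈ D) ∧ WStarTendsto d a := by
  obtain ⟨u, hu⟩ := exists_dense_seq E
  set S := Metric.sphere (0 : StrongDual ℝ E) 1
  let e : StrongDual ℝ E → ℕ → ℝ := fun f k => f (u k)
  obtain ⟨t, hts, htc, hSt⟩ := (IsSeparable.of_separableSpace (e '' S)).exists_countable_dense_subset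
  have hpre : ∀ z ∈ t, Function.invFunOn e S z ∈ S ∧ e (Function.invFunOn e S z) = z :=
    fun z hz => ⟨Function.invFunOn_mem (hts hz), Function.invFunOn_eq (hts hz)⟩
  refine ⟨Function.invFunOn e S '' t, htc.image _, ?_, fun a ha => ?_⟩
  · rintro _ ⟨z, hz, rfl⟩
    exact (hpre z hz).1
  obtain ⟨z, hzt, hz⟩ := mem_closure_iff_seq_limit.1 (hSt (Set.mem_image_of_mem e ha))
  refine ⟨fun n => Function.invFunOn e S (z n), fun n => Set.mem_image_of_mem _ (hzt n), ?_⟩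
  refine ContinuousLinearMap.tendsto_apply_of_denseRange
    ⟨1, fun n => (mem_sphere_zero_iff_norm.1 (hpre _ (hzt n)).1).le⟩ hu fun k => ?_
  have hcoord : (fun n => Function.invFunOn e S (z n) (u k)) = fun n => z n k :=
    funext fun n => congrFun (hpre _ (hzt n)).2 k
  exact hcoord ▸ tendsto_pi_nhds.1 hz k

theorem WKKStar.exists_subseq_weakTendsto_of_subspace {X : Type*} [NormedAddCommGroup X]
    [NormedSpace ℝ X] (hKK : WKKStar X) (hseq : DualBallWStarSeqCompact X) (Y : Subspace ℝ X)
    {d : ℕ → StrongDual ℝ Y} {a : StrongDual ℝ Y} (hd : ∀ n, ‖d n‖ = 1) (ha : ‖a‖ = 1)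
    (hda : WStarTendsto d a) : ∃ φ : ℕ → ℕ, StrictMono φ ∧ WeakTendsto (d ∘ φ) a := by
  choose ext hext_apply hext_norm using fun f : StrongDual ℝ Y => exists_extension_norm_eq Y f
  let R : StrongDual ℝ X →L[ℝ] StrongDual ℝ Y := ContinuousLinearMap.precomp ℝ Y.subtypeL
  have hR_ext : ∀ f, R (ext f) = f := fun f => ContinuousLinearMap.ext (hext_apply f)
  obtain ⟨G, φ, hG, hφ, hGt⟩ := hseq (ext ∘ d) fun n => by simp [hext_norm, hd]
  have hRG : R G = a := ContinuousLinearMap.ext fun y => by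
    have hGy : Tendsto (fun n => d (φ n) y) atTop (𝓝 (G y)) := by
      simpa only [Function.comp_apply, hext_apply] using hGt y
    exact tendsto_nhds_unique hGy ((hda y).comp hφ.tendsto_atTop)
  have hG_norm : ‖G‖ = 1 := by
    refine le_antisymm hG ?_
    calc 1 = ‖R G‖ := by rw [hRG, ha]
      _ ≤ ‖G‖ * ‖Y.subtypeL‖ := G.opNorm_comp_le _
      _ ≤ ‖G‖ := mul_le_of_le_one_right (norm_nonneg G) (Submodule.norm_subtypeL_le Y)
  refine ⟨φ, hφ, fun F => ?_⟩
  simpa only [Function.comp_apply, ContinuousLinearMap.comp_apply, hR_ext, hRG] using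
    hKK (ext ∘ d ∘ φ) G (fun n => by simp [hext_norm, hd]) hG_norm hGt (F.comp R)

theorem asplund_of_wstarSeqCompact_and_wKKstar_general
    (X : Type*) [NormedAddCommGroup X] [NormedSpace ℝ X]
    (hseq : DualBallWStarSeqCompact X) (hKK : WKKStar X) :
    ∀ Y : Subspace ℝ X, SeparableSpace Y → SeparableSpace (StrongDual ℝ Y) := by
  intro Y _
  obtain ⟨D, hD_countable, hD_sphere, hD_dense⟩ := exists_countable_subset_sphere_wStarTendsto Y
  refine separableSpace_of_sphere_subset_closure_span (𝕜 := ℝ) hD_countable fun a ha => ?_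
  obtain ⟨d, hdD, hda⟩ := hD_dense a ha
  obtain ⟨φ, -, hweak⟩ := hKK.exists_subseq_weakTendsto_of_subspace hseq Y
    (fun n => mem_sphere_zero_iff_norm.1 (hD_sphere (hdD n))) (mem_sphere_zero_iff_norm.1 ha) hda
  exact (Submodule.convex _).mem_of_tendsto_dual_apply (Submodule.isClosed_topologicalClosure _)
    hweak (Eventually.of_forall fun n =>
      Submodule.le_topologicalClosure _ (Submodule.subset_span (hdD (φ n))))

/-- a Banach space whose dual unit ball is weak-star sequentially compact and
whose dual has the wKK* property is Asplund: every separable subspace has separable dual. -/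
theorem asplund_of_wstarSeqCompact_and_wKKstar
    (X : Type*) [NormedAddCommGroup X] [NormedSpace ℝ X] [CompleteSpace X]
    (hseq : DualBallWStarSeqCompact X) (hKK : WKKStar X) :
    ∀ Y : Subspace ℝ X, SeparableSpace Y → SeparableSpace (StrongDual ℝ Y) :=
  asplund_of_wstarSeqCompact_and_wKKstar_general X hseq hKK
end

section
/- Let X be a Banach space such that: (a) countable intersections of coseparable closed subspaces of X are coseparable (a closed subspace Z is coseparable if X/Z is separable), and (b) X* has the dual weak Kadec-Klee property. Then X is an Asplund space. -/
open NormedSpace Filter Topology TopologicalSpace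

open Set

/-!
Given a separable `Y ⊆ X`, pick a dense sequence `yₖ` in `Y` and functionals `fₖ` of norm `≤ 1`
with `fₖ yₖ = ‖yₖ‖`. By (a) the intersection `N` of their kernels is coseparable, and the quotient
map `X → X/N` is isometric on `Y`; by Hahn–Banach it suffices that `(X/N)*` is separable.
Precomposition with the quotient map embeds `(X/N)*` isometrically into `X*`. As `X/N` is
separable, every `h` in the unit sphere of `(X/N)*` is the weak* limit of a sequence from one
fixed countable subset `C` of the sphere; wKK* turns this into weak convergence in `X*`, and a
weak limit of a sequence in a subspace lies in its norm closure. So the sphere, hence all of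
`(X/N)*`, lies in the closed span of `C`.
-/

theorem separableSpace_quotient_ker {X : Type*} [NormedAddCommGroup X] [NormedSpace ℝ X]
    (f : StrongDual ℝ X) : SeparableSpace (X ⧸ f.ker) := by
  let e := (f : X →ₗ[ℝ] ℝ).quotKerEquivRange
  exact e.symm.surjective.denseRange.separableSpace
    (LinearMap.continuous_of_finiteDimensional e.symm.toLinearMap)

theorem ContinuousLinearMap.norm_apply_le_mul_norm_mk {X F : Type*}
    [SeminormedAddCommGroup X] [NormedSpace ℝ X] [SeminormedAddCommGroup F] [NormedSpace ℝ F]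
    {N : Submodule ℝ X} (f : X →L[ℝ] F) (hf : N ≤ f.ker) (x : X) :
    ‖f x‖ ≤ ‖f‖ * ‖(Submodule.Quotient.mk x : X ⧸ N)‖ := by
  let φ := (f : X →+ F).mkNormedAddGroupHom ‖f‖ f.le_opNorm
  calc ‖f x‖ = ‖QuotientAddGroup.lift N.toAddSubgroup φ.toAddMonoidHom (fun _ hy => hf hy)
        (x : X ⧸ N.toAddSubgroup)‖ := rfl
    _ ≤ ‖φ‖ * ‖(Submodule.Quotient.mk x : X ⧸ N)‖ := QuotientAddGroup.norm_lift_apply_le φ _ _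
    _ ≤ ‖f‖ * ‖(Submodule.Quotient.mk x : X ⧸ N)‖ := by
      gcongr
      exact AddMonoidHom.mkNormedAddGroupHom_norm_le _ (norm_nonneg f) _

theorem Submodule.norm_comp_mkQL {X F : Type*} [SeminormedAddCommGroup X] [NormedSpace ℝ X]
    [SeminormedAddCommGroup F] [NormedSpace ℝ F] (N : Submodule ℝ X) (h : (X ⧸ N) →L[ℝ] F) :
    ‖h.comp N.mkQL‖ = ‖h‖ := by
  refine le_antisymm (ContinuousLinearMap.opNorm_le_bound _ (norm_nonneg h) fun x => ?_)
    (ContinuousLinearMap.opNorm_le_bound _ (norm_nonneg _) fun e => ?_)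
  · exact (h.le_opNorm _).trans (by gcongr; exact Submodule.Quotient.norm_mk_le N x)
  · obtain ⟨x, rfl⟩ := Submodule.Quotient.mk_surjective N e
    refine (h.comp N.mkQL).norm_apply_le_mul_norm_mk (fun y hy => ?_) x
    simp [(Submodule.Quotient.mk_eq_zero N).2 hy]

theorem exists_norming_seq {X : Type*} [NormedAddCommGroup X] [NormedSpace ℝ X]
    (Y : Subspace ℝ X) [SeparableSpace Y] :
    ∃ f : ℕ → StrongDual ℝ X, (∀ k, ‖f k‖ ≤ 1) ∧ ∀ p : X → ℝ, Continuous p →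
      (∀ k x, ‖f k x‖ ≤ p x) → ∀ y ∈ Y, ‖y‖ ≤ p y := by
  have : Nonempty Y := ⟨0⟩
  choose f hf_le hf_eq using fun k => exists_dual_vector'' ℝ (denseSeq Y k : X)
  refine ⟨f, hf_le, fun p hp hfp y hy => ?_⟩
  have hdense : (y : X) ∈ closure (range fun k => (denseSeq Y k : X)) := by
    have := image_closure_subset_closure_image continuous_subtype_val
      (mem_image_of_mem _ (denseRange_denseSeq Y ⟨y, hy⟩))
    rwa [← range_comp] at this
  refine closure_minimal ?_ (isClosed_le continuous_norm hp) hdense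
  rintro _ ⟨k, rfl⟩
  calc ‖(denseSeq Y k : X)‖ = f k (denseSeq Y k) := (hf_eq k).symm
    _ ≤ ‖f k (denseSeq Y k)‖ := Real.le_norm_self _
    _ ≤ p (denseSeq Y k) := hfp k _

theorem ContinuousLinearMap.tendsto_apply_of_tendsto_apply_denseRange {ι E F : Type*}
    [SeminormedAddCommGroup E] [NormedSpace ℝ E] [SeminormedAddCommGroup F] [NormedSpace ℝ F]
    {s : ℕ → E →L[ℝ] F} {C : ℝ} (hs : ∀ n, ‖s n‖ ≤ C) {g : E →L[ℝ] F} {v : ι → E}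
    (hv : DenseRange v) (hconv : ∀ i, Tendsto (fun n => s n (v i)) atTop (𝓝 (g (v i))))
    (x : E) : Tendsto (fun n => s n x) atTop (𝓝 (g x)) := by
  have hequi : Equicontinuous fun n => ⇑(s n) :=
    ((NormedSpace.equicontinuous_TFAE s).out 5 1).1 (⟨C, hs⟩ : ∃ C, ∀ n, ‖s n‖ ≤ C)
  exact closure_minimal (range_subset_iff.2 hconv)
    (hequi.isClosed_setOfPred_tendsto g.continuous) (hv x)

theorem exists_countable_subset_wStarTendsto {E : Type*} [NormedAddCommGroup E]
    [NormedSpace ℝ E] [SeparableSpace E] {S : Set (StrongDual ℝ E)} (hS : Bornology.IsBounded S) :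
    ∃ C ⊆ S, C.Countable ∧
      ∀ h ∈ S, ∃ s : ℕ → StrongDual ℝ E, (∀ n, s n ∈ C) ∧ WStarTendsto s h := by
  obtain ⟨R, hR⟩ := isBounded_iff_forall_norm_le.1 hS
  -- on bounded sets, weak* convergence is convergence of `Φ` in the metrizable space `ℕ → ℝ`
  let Φ : StrongDual ℝ E → ℕ → ℝ := fun h m => h (denseSeq E m)
  obtain ⟨t, htS, htc, hSt⟩ :=
    (IsSeparable.of_separableSpace (Φ '' S)).exists_countable_dense_subset
  choose! g hgS hgΦ using fun b (hb : b ∈ t) => htS hb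
  refine ⟨g '' t, image_subset_iff.2 hgS, htc.image g, fun h hh => ?_⟩
  obtain ⟨w, hwt, hw⟩ := mem_closure_iff_seq_limit.1 (hSt (mem_image_of_mem Φ hh))
  refine ⟨fun n => g (w n), fun n => mem_image_of_mem g (hwt n), ?_⟩
  refine ContinuousLinearMap.tendsto_apply_of_tendsto_apply_denseRange
    (fun n => hR _ (hgS _ (hwt n))) (denseRange_denseSeq E) fun m => ?_
  have hgw : ∀ n, g (w n) (denseSeq E m) = w n m := fun n => congrFun (hgΦ _ (hwt n)) m
  simpa only [hgw] using tendsto_pi_nhds.1 hw m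

theorem Convex.mem_closure_of_forall_tendsto_dual {W : Type*} [NormedAddCommGroup W]
    [NormedSpace ℝ W] {K : Set W} (hK : Convex ℝ K) {s : ℕ → W} (hs : ∀ n, s n ∈ K) {x : W}
    (hx : ∀ F : StrongDual ℝ W, Tendsto (fun n => F (s n)) atTop (𝓝 (F x))) :
    x ∈ closure K := by
  have hlim : Tendsto (fun n => toWeakSpace ℝ W (s n)) atTop (𝓝 (toWeakSpace ℝ W x)) :=
    ((Topology.IsInducing.induced _).tendsto_nhds_iff).2 (tendsto_pi_nhds.2 hx)
  have : toWeakSpace ℝ W x ∈ toWeakSpace ℝ W '' closure K := by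
    rw [hK.toWeakSpace_closure ℝ]
    exact mem_closure_of_tendsto hlim (Eventually.of_forall fun n => mem_image_of_mem _ (hs n))
  simpa using this

theorem separableSpace_dual_of_wKKStar {X E : Type*} [NormedAddCommGroup X] [NormedSpace ℝ X]
    [NormedAddCommGroup E] [NormedSpace ℝ E] [SeparableSpace E] (hKK : WKKStar X)
    (q : X →L[ℝ] E) (hq : ∀ h : StrongDual ℝ E, ‖h.comp q‖ = ‖h‖) :
    SeparableSpace (StrongDual ℝ E) := by
  let T : StrongDual ℝ E →L[ℝ] StrongDual ℝ X := ContinuousLinearMap.precomp ℝ q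
  have hT : Isometry T := AddMonoidHomClass.isometry_of_norm T hq
  obtain ⟨C, hCS, hCc, hC⟩ := exists_countable_subset_wStarTendsto (Metric.isBounded_sphere
    (x := (0 : StrongDual ℝ E)) (r := 1))
  let M := (Submodule.span ℝ C).topologicalClosure
  have hsphere : ∀ h : StrongDual ℝ E, ‖h‖ = 1 → h ∈ M := by
    intro h hh
    obtain ⟨s, hsC, hs⟩ := hC h (by simpa using hh)
    have hs_norm : ∀ n, ‖s n‖ = 1 := fun n => by simpa using hCS (hsC n)
    have hweak : WeakTendsto (fun n => T (s n)) (T h) :=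
      hKK _ _ (fun n => (hq _).trans (hs_norm n)) ((hq h).trans hh) fun x => hs (q x)
    have hTh : T h ∈ closure (T '' Submodule.span ℝ C) :=
      ((Submodule.span ℝ C).convex.linear_image T.toLinearMap).mem_closure_of_forall_tendsto_dual
        (fun n => mem_image_of_mem T (Submodule.subset_span (hsC n))) hweak
    show h ∈ closure (Submodule.span ℝ C : Set (StrongDual ℝ E))
    rwa [hT.isUniformInducing.isInducing.closure_eq_preimage_closure_image]
  have hM : ∀ h, h ∈ M := by
    intro h
    rcases eq_or_ne h 0 with rfl | h0
    · exact M.zero_mem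
    · have hn : ‖h‖ ≠ 0 := norm_ne_zero_iff.2 h0
      have hu : ‖‖h‖⁻¹ • h‖ = 1 := by rw [norm_smul, norm_inv, norm_norm, inv_mul_cancel₀ hn]
      simpa [smul_inv_smul₀ hn] using M.smul_mem ‖h‖ (hsphere _ hu)
  exact isSeparable_univ_iff.1 (hCc.isSeparable.span.closure.mono fun h _ => hM h)

theorem separableSpace_dual_of_linearIsometry {Y E : Type*} [NormedAddCommGroup Y]
    [NormedSpace ℝ Y] [NormedAddCommGroup E] [NormedSpace ℝ E] [SeparableSpace (StrongDual ℝ E)]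
    (A : Y →ₗᵢ[ℝ] E) : SeparableSpace (StrongDual ℝ Y) := by
  let e := A.equivRange
  let ρ : StrongDual ℝ E →L[ℝ] StrongDual ℝ Y :=
    ContinuousLinearMap.precomp ℝ A.toContinuousLinearMap
  have hsurj : Function.Surjective ρ := by
    intro φ
    obtain ⟨G, hG, -⟩ :=
      exists_extension_norm_eq _ (φ.comp e.symm.toContinuousLinearEquiv.toContinuousLinearMap)
    refine ⟨G, ContinuousLinearMap.ext fun y => ?_⟩
    show G (A y) = φ y
    simpa [e] using hG (e y)
  exact hsurj.denseRange.separableSpace ρ.continuous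

theorem asplund_of_coseparable_intersections_and_wKKstar_general
    (X : Type*) [NormedAddCommGroup X] [NormedSpace ℝ X]
    (hcosep : ∀ Z : ℕ → Subspace ℝ X, (∀ n, IsClosed (Z n : Set X)) →
      (∀ n, SeparableSpace (X ⧸ Z n)) → SeparableSpace (X ⧸ (⨅ n, Z n)))
    (hKK : WKKStar X) :
    ∀ Y : Subspace ℝ X, SeparableSpace Y → SeparableSpace (StrongDual ℝ Y) := by
  intro Y _
  obtain ⟨f, hf_le, hf_norming⟩ := exists_norming_seq Y
  let N : Subspace ℝ X := ⨅ k, (f k).ker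
  have : IsClosed (N : Set X) := by
    simpa [N] using isClosed_iInter fun k => (f k).isClosed_ker
  have : SeparableSpace (X ⧸ N) :=
    hcosep _ (fun k => (f k).isClosed_ker) fun k => separableSpace_quotient_ker (f k)
  have : SeparableSpace (StrongDual ℝ (X ⧸ N)) :=
    separableSpace_dual_of_wKKStar hKK N.mkQL N.norm_comp_mkQL
  have hf_mk : ∀ k x, ‖f k x‖ ≤ ‖(Submodule.Quotient.mk x : X ⧸ N)‖ := fun k x =>
    ((f k).norm_apply_le_mul_norm_mk (iInf_le _ k) x).trans
      (mul_le_of_le_one_left (norm_nonneg _) (hf_le k))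
  let A : Y →ₗᵢ[ℝ] X ⧸ N :=
    { N.mkQ.comp Y.subtype with
      norm_map' := fun y => le_antisymm (Submodule.Quotient.norm_mk_le N y)
        (hf_norming _ (continuous_norm.comp N.mkQL.continuous) hf_mk y y.2) }
  exact separableSpace_dual_of_linearIsometry A

/-- if countable intersections of coseparable closed subspaces of `X` are
coseparable, and `X*` has the wKK* property, then `X` is Asplund. -/
theorem asplund_of_coseparable_intersections_and_wKKstar
    (X : Type*) [NormedAddCommGroup X] [NormedSpace ℝ X] [CompleteSpace X]
    (hcosep : ∀ Z : ℕ → Subspace ℝ X, (∀ n, IsClosed (Z n : Set X)) →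
      (∀ n, SeparableSpace (X ⧸ Z n)) → SeparableSpace (X ⧸ (⨅ n, Z n)))
    (hKK : WKKStar X) :
    ∀ Y : Subspace ℝ X, SeparableSpace Y → SeparableSpace (StrongDual ℝ Y) :=
  asplund_of_coseparable_intersections_and_wKKstar_general X hcosep hKK
end

section
/- Let X be a Banach space with the 1-separable complementation property (every separable subspace is contained in a separable subspace that is the range of a norm-one linear projection), and suppose X* has the dual weak Kadec-Klee property. Then X is an Asplund space. -/
/-! Let `Y` be separable and let `Z ⊇ Y` be separable and 1-complemented. Composition with the
norm-one projection embeds `Z*` isometrically into `X*`, so `Z*` inherits wKK*. If `(s k)` is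
dense in `Z`, then on bounded subsets of `Z*` weak* convergence is convergence of `g ↦ (g (s k))ₖ`
in `ℕ → ℝ`, a metrizable separable space; so the unit sphere of `Z*` contains a countable set `D`
of which every point of the sphere is a weak* sequential limit. By wKK* these limits are weak
limits, hence (Mazur) lie in the closed linear span of `D`, which is therefore all of `Z*`.
Finally `Y*` is a quotient of `Z*` by Hahn–Banach. -/

open NormedSpace Filter Topology TopologicalSpace

/-- The 1-separable complementation property: every separable subspace is contained in a
separable subspace which is the range of a norm-one linear projection. -/
def OneSCP (X : Type*) [NormedAddCommGroup X] [NormedSpace ℝ X] : Prop :=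
  ∀ Y : Subspace ℝ X, SeparableSpace Y →
    ∃ (Z : Subspace ℝ X) (P : X →L[ℝ] X), Y ≤ Z ∧ SeparableSpace Z ∧
      ‖P‖ = 1 ∧ (∀ w : X, P w ∈ Z) ∧ (∀ z ∈ Z, P z = z)

theorem WKKStar.of_retraction {X Z : Type*} [NormedAddCommGroup X] [NormedSpace ℝ X]
    [NormedAddCommGroup Z] [NormedSpace ℝ Z] (hX : WKKStar X) (π : X →L[ℝ] Z) (ι : Z →L[ℝ] X)
    (hπι : ∀ z, π (ι z) = z) (hπ : ‖π‖ ≤ 1) (hι : ‖ι‖ ≤ 1) : WKKStar Z := by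
  have hnorm : ∀ g : StrongDual ℝ Z, ‖g.comp π‖ = ‖g‖ := by
    intro g
    have hres : (g.comp π).comp ι = g := by ext z; simp [hπι]
    apply le_antisymm
    · calc ‖g.comp π‖ ≤ ‖g‖ * ‖π‖ := g.opNorm_comp_le π
        _ ≤ ‖g‖ := mul_le_of_le_one_right (norm_nonneg _) hπ
    · calc ‖g‖ = ‖(g.comp π).comp ι‖ := by rw [hres]
        _ ≤ ‖g.comp π‖ * ‖ι‖ := (g.comp π).opNorm_comp_le ι
        _ ≤ ‖g.comp π‖ := mul_le_of_le_one_right (norm_nonneg _) hι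
  intro d f hd hf hdf F
  let R : StrongDual ℝ X →L[ℝ] StrongDual ℝ Z := (ContinuousLinearMap.compL ℝ Z X ℝ).flip ι
  have hR : ∀ g, R (g.comp π) = g := fun g => by ext z; simp [R, hπι]
  have hweak := hX (fun n => (d n).comp π) (f.comp π) (fun n => (hnorm _).trans (hd n))
    ((hnorm f).trans hf) (fun x => hdf (π x)) (F.comp R)
  simpa only [ContinuousLinearMap.comp_apply, hR] using hweak

theorem WKKStar.of_projection {X : Type*} [NormedAddCommGroup X] [NormedSpace ℝ X]
    (hX : WKKStar X) {Z : Subspace ℝ X} (P : X →L[ℝ] X) (hP : ‖P‖ ≤ 1) (hPZ : ∀ x, P x ∈ Z)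
    (hPfix : ∀ z ∈ Z, P z = z) : WKKStar Z := by
  refine hX.of_retraction (P.codRestrict Z hPZ) Z.subtypeL (fun z => Subtype.ext (hPfix z z.2))
    ?_ (Submodule.norm_subtypeL_le Z)
  refine ContinuousLinearMap.opNorm_le_bound _ zero_le_one fun x => ?_
  calc ‖P.codRestrict Z hPZ x‖ = ‖P x‖ := rfl
    _ ≤ 1 * ‖x‖ := P.le_of_opNorm_le hP x

theorem Convex.mem_of_forall_tendsto_dual {E : Type*} [NormedAddCommGroup E] [NormedSpace ℝ E]
    {s : Set E} (hs : Convex ℝ s) (hsc : IsClosed s) {d : ℕ → E} (hd : ∀ n, d n ∈ s) {x : E}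
    (h : ∀ F : StrongDual ℝ E, Tendsto (fun n => F (d n)) atTop (𝓝 (F x))) : x ∈ s := by
  have hweak : Tendsto (fun n => toWeakSpace ℝ E (d n)) atTop (𝓝 (toWeakSpace ℝ E x)) :=
    (WeakBilin.tendsto_iff_forall_eval_tendsto _ fun x y hxy =>
      (SeparatingDual.eq_iff_forall_dual_eq).2 (LinearMap.congr_fun hxy)).2 h
  have hcl : toWeakSpace ℝ E x ∈ closure (toWeakSpace ℝ E '' s) :=
    mem_closure_of_tendsto hweak (Eventually.of_forall fun n => Set.mem_image_of_mem _ (hd n))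
  rw [← hs.toWeakSpace_closure ℝ, hsc.closure_eq] at hcl
  simpa using hcl

theorem ContinuousLinearMap.tendsto_apply_of_dense {ι E F : Type*} [NormedAddCommGroup E]
    [NormedSpace ℝ E] [NormedAddCommGroup F] [NormedSpace ℝ F] {l : Filter ι}
    {T : ι → E →L[ℝ] F} {C : ℝ} (hT : ∀ i, ‖T i‖ ≤ C) (S : E →L[ℝ] F) {s : Set E}
    (hs : Dense s) (h : ∀ x ∈ s, Tendsto (fun i => T i x) l (𝓝 (S x))) (x : E) :
    Tendsto (fun i => T i x) l (𝓝 (S x)) := by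
  have hequi : Equicontinuous ((↑) ∘ T : ι → E → F) :=
    ((NormedSpace.equicontinuous_TFAE T).out 5 1).1 (⟨C, hT⟩ : ∃ C, ∀ i, ‖T i‖ ≤ C)
  exact (hequi.isClosed_setOfPred_tendsto S.continuous).closure_subset_iff.2 h (hs x)

theorem exists_countable_wStarTendsto_dense {Z : Type*} [NormedAddCommGroup Z]
    [NormedSpace ℝ Z] [SeparableSpace Z] {A : Set (StrongDual ℝ Z)} {C : ℝ}
    (hA : ∀ g ∈ A, ‖g‖ ≤ C) :
    ∃ D ⊆ A, D.Countable ∧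
      ∀ f ∈ A, ∃ d : ℕ → StrongDual ℝ Z, (∀ n, d n ∈ D) ∧ WStarTendsto d f := by
  obtain ⟨s, hs⟩ := exists_dense_seq Z
  set Φ : StrongDual ℝ Z → ℕ → ℝ := fun g k => g (s k)
  obtain ⟨T, hTA, hTc, hAT⟩ :=
    (IsSeparable.of_separableSpace (Φ '' A)).exists_countable_dense_subset
  set lift := Function.invFunOn Φ A
  have hlift : ∀ t ∈ T, lift t ∈ A ∧ Φ (lift t) = t := fun t ht =>
    ⟨Function.invFunOn_mem (hTA ht), Function.invFunOn_eq (hTA ht)⟩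
  refine ⟨lift '' T, Set.image_subset_iff.2 fun t ht => (hlift t ht).1, hTc.image lift, ?_⟩
  rintro f hf
  obtain ⟨t, htT, hlim⟩ := mem_closure_iff_seq_limit.1 (hAT (Set.mem_image_of_mem Φ hf))
  refine ⟨fun n => lift (t n), fun n => Set.mem_image_of_mem lift (htT n), ?_⟩
  refine ContinuousLinearMap.tendsto_apply_of_dense (fun n => hA _ (hlift _ (htT n)).1) f hs ?_
  rintro - ⟨k, rfl⟩
  have hcoord : ∀ n, lift (t n) (s k) = t n k := fun n => congrFun (hlift _ (htT n)).2 k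
  simpa only [hcoord] using tendsto_pi_nhds.1 hlim k

theorem Submodule.eq_top_of_sphere_subset {E : Type*} [NormedAddCommGroup E] [NormedSpace ℝ E]
    {M : Submodule ℝ E} (h : Metric.sphere 0 1 ⊆ (M : Set E)) : M = ⊤ := by
  refine eq_top_iff'.2 fun x => ?_
  rcases eq_or_ne x 0 with rfl | hx
  · exact M.zero_mem
  · have hunit : ‖x‖⁻¹ • x ∈ M := h (mem_sphere_zero_iff_norm.2 (norm_smul_inv_norm hx))
    simpa [smul_smul, hx] using M.smul_mem ‖x‖ hunit

theorem WKKStar.separableSpace_strongDual {Z : Type*} [NormedAddCommGroup Z] [NormedSpace ℝ Z]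
    [SeparableSpace Z] (hZ : WKKStar Z) : SeparableSpace (StrongDual ℝ Z) := by
  obtain ⟨D, hDS, hDc, hD⟩ :=
    exists_countable_wStarTendsto_dense (A := Metric.sphere (0 : StrongDual ℝ Z) 1)
      fun g hg => (mem_sphere_zero_iff_norm.1 hg).le
  set M := (Submodule.span ℝ D).topologicalClosure
  have hsphere : Metric.sphere 0 1 ⊆ (M : Set (StrongDual ℝ Z)) := by
    intro f hf
    obtain ⟨d, hdD, hdf⟩ := hD f hf
    have hdM : ∀ n, d n ∈ M := fun n =>
      Submodule.le_topologicalClosure _ (Submodule.subset_span (hdD n))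
    exact M.convex.mem_of_forall_tendsto_dual (Submodule.span ℝ D).isClosed_topologicalClosure hdM
      (hZ d f (fun n => mem_sphere_zero_iff_norm.1 (hDS (hdD n))) (mem_sphere_zero_iff_norm.1 hf)
        hdf)
  rw [← isSeparable_univ_iff, ← Submodule.top_coe (R := ℝ),
    ← Submodule.eq_top_of_sphere_subset hsphere, Submodule.topologicalClosure_coe]
  exact hDc.isSeparable.span.closure

theorem separableSpace_strongDual_of_le {X : Type*} [NormedAddCommGroup X] [NormedSpace ℝ X]
    {Y Z : Subspace ℝ X} (hYZ : Y ≤ Z) [SeparableSpace (StrongDual ℝ Z)] :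
    SeparableSpace (StrongDual ℝ Y) := by
  let ι : Y →L[ℝ] Z := (Submodule.inclusion hYZ).mkContinuous 1 fun y => by simp
  let ρ : StrongDual ℝ Z →L[ℝ] StrongDual ℝ Y := (ContinuousLinearMap.compL ℝ Y Z ℝ).flip ι
  have hρ : Function.Surjective ρ := by
    intro f
    obtain ⟨g, hg, -⟩ := exists_extension_norm_eq Y f
    exact ⟨g.comp Z.subtypeL, by ext y; exact hg y⟩
  exact hρ.denseRange.separableSpace ρ.continuous

theorem asplund_of_oneSCP_and_wKKstar_general
    (X : Type*) [NormedAddCommGroup X] [NormedSpace ℝ X]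
    (hSCP : OneSCP X) (hKK : WKKStar X) :
    ∀ Y : Subspace ℝ X, SeparableSpace Y → SeparableSpace (StrongDual ℝ Y) := by
  intro Y hY
  obtain ⟨Z, P, hYZ, hZ, hP, hPZ, hPfix⟩ := hSCP Y hY
  have : SeparableSpace (StrongDual ℝ Z) :=
    (hKK.of_projection P hP.le hPZ hPfix).separableSpace_strongDual
  exact separableSpace_strongDual_of_le hYZ

/-- a Banach space with the 1-SCP whose dual has the wKK* property is
Asplund. -/
theorem asplund_of_oneSCP_and_wKKstar
    (X : Type*) [NormedAddCommGroup X] [NormedSpace ℝ X] [CompleteSpace X]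
    (hSCP : OneSCP X) (hKK : WKKStar X) :
    ∀ Y : Subspace ℝ X, SeparableSpace Y → SeparableSpace (StrongDual ℝ Y) :=
  asplund_of_oneSCP_and_wKKstar_general X hSCP hKK
end
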